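/- Assume in addition that σ is even, i.e. P σ = σ P, and define the Heisenberg-picture GKSL generator L*(X) = Φ*(X) − (1/2)(Φ*(1) X + X Φ*(1)). Then for all finsets I, J ⊆ Fin m, L*(f_J† f_I) = [ Σ (−1)^{|Ξ|(|K|+|L|)} · conj(det(A_{J×K} | B_{J×Ξ})) · Γ_{Ξ;Ω} · det(A_{I×L} | B_{I×Ω}) · f_K† f_L ] − Γ_{∅;∅} f_J† f_I, where the sum runs over all finsets K, L, Ξ, Ω ⊆ Fin m with |K| + |Ξ| = |J|, |L| + |Ω| = |I|, and |Ξ| + |Ω| even. -/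

import Mathlib

open Matrix Finset Kronecker ComplexConjugate
open scoped ComplexOrder

noncomputable section

/-- Ordered product of a family over a finset, factors in increasing index order. -/
def oprod {R : Type*} [Monoid R] {m : ℕ} (x : Fin m → R) (I : Finset (Fin m)) : R :=
  ((I.sort (· ≤ ·)).map x).prod

/-- Complex matrices indexed by `Fin (2^m)`. -/
abbrev Mat (m : ℕ) := Matrix (Fin (2^m)) (Fin (2^m)) ℂ

/-- Complex matrices on the tensor product `ℂ^{2^m} ⊗ ℂ^{2^m}`. -/
abbrev Mat2 (m : ℕ) := Matrix (Fin (2^m) × Fin (2^m)) (Fin (2^m) × Fin (2^m)) ℂ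

variable {m : ℕ}

/-- The parity operator `P = ∏_j (1 - 2 f_jᴴ f_j)`. -/
def parity (f : Fin m → Mat m) : Mat m :=
  oprod (fun j => 1 - (2:ℂ) • ((f j)ᴴ * f j)) Finset.univ

/-- Parity-trick operator `a_i = f_i ⊗ 1`. -/
def aOp (f : Fin m → Mat m) (i : Fin m) : Mat2 m := f i ⊗ₖ (1 : Mat m)

/-- Parity-trick operator `b_i = P ⊗ f_i`. -/
def bOp (f : Fin m → Mat m) (i : Fin m) : Mat2 m := parity f ⊗ₖ f i

/-- Partial trace over the second tensor factor. -/
def ptrace2 (M : Mat2 m) : Mat m := Matrix.of fun i j => ∑ s, M (i, s) (j, s)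

/-- The Heisenberg-picture map `Φ*(X) = Tr₂[(1 ⊗ σ) Uᴴ (X ⊗ 1) U]`. -/
def PhiStar (U : Mat2 m) (σ : Mat m) (X : Mat m) : Mat m :=
  ptrace2 (((1 : Mat m) ⊗ₖ σ) * Uᴴ * (X ⊗ₖ (1 : Mat m)) * U)

/-- Environment correlation tensor `Γ_{Ξ;Ω} = Tr(σ f_Ξ† f_Ω)`. -/
def Gam (f : Fin m → Mat m) (σ : Mat m) (Ξ Ω : Finset (Fin m)) : ℂ :=
  Matrix.trace (σ * (oprod f Ξ)ᴴ * oprod f Ω)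

/-- `det (A_{I×L} | B_{I×Λ})`: determinant of the square matrix whose rows are indexed
by `I` in increasing order, whose first `|L|` columns are entries of `A` with columns
from `L` in increasing order, and whose last `|Λ|` columns are entries of `B` with
columns from `Λ` in increasing order (defined to be `0` if `|L| + |Λ| ≠ |I|`). -/
def concatDet {m : ℕ} (A B : Matrix (Fin m) (Fin m) ℂ) (I L Λ : Finset (Fin m)) : ℂ :=
  if h : L.card + Λ.card = I.card then
    Matrix.det (Matrix.of fun r c : Fin I.card =>
      Sum.elim
        (fun l => A (I.orderIsoOfFin rfl r) (L.orderIsoOfFin rfl l))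
        (fun w => B (I.orderIsoOfFin rfl r) (Λ.orderIsoOfFin rfl w))
        (finSumFinEquiv.symm (Fin.cast h.symm c)))
  else 0

/-- The Heisenberg-picture GKSL generator `L*(X) = Φ*(X) - ½(Φ*(1) X + X Φ*(1))`. -/
def LStar (U : Mat2 m) (σ : Mat m) (X : Mat m) : Mat m :=
  PhiStar U σ X - (1/2 : ℂ) • (PhiStar U σ 1 * X + X * PhiStar U σ 1)

/-! ### Auxiliary machinery -/

section ListHelpers

variable {R : Type*} [Ring R] [Algebra ℂ R]

lemma pass_list (p : R) : ∀ (l : List R), (∀ x ∈ l, p * x = -(x * p)) →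
    p * l.prod = (-1:ℂ) ^ l.length • (l.prod * p)
  | [], _ => by simp
  | x :: l, h => by
    have hx := h x (by simp)
    have hl := pass_list p l (fun y hy => h y (by simp [hy]))
    simp only [List.prod_cons, List.length_cons]
    rw [← mul_assoc, hx, neg_mul, mul_assoc, hl, mul_smul_comm, pow_succ,
      mul_comm ((-1:ℂ) ^ l.length), mul_smul, neg_one_smul, mul_assoc]

lemma mul_map_prod_eq_zero {T : Type*} (d : T → R)
    (hd : ∀ s t, d s * d t = -(d t * d s)) (hsq : ∀ t, d t * d t = 0) :
    ∀ (l : List T) (t : T), t ∈ l → d t * (l.map d).prod = 0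
  | x :: l, t, ht => by
    simp only [List.map_cons, List.prod_cons, ← mul_assoc]
    rcases List.mem_cons.mp ht with rfl | ht
    · rw [hsq, zero_mul]
    · rw [hd t x, neg_mul, mul_assoc, mul_map_prod_eq_zero d hd hsq l t ht, mul_zero, neg_zero]

end ListHelpers

section Fprod

/-- `fprod` : ordered product over a finset of an arbitrary linearly ordered type. -/
def fprod {R : Type*} [Monoid R] {T : Type*} [LinearOrder T] (x : T → R) (S : Finset T) : R :=
  ((S.sort (· ≤ ·)).map x).prod

lemma oprod_eq_fprod {R : Type*} [Monoid R] {m : ℕ} (x : Fin m → R) (I : Finset (Fin m)) :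
    oprod x I = fprod x I := rfl

@[simp] lemma fprod_empty {R : Type*} [Monoid R] {T : Type*} [LinearOrder T] (x : T → R) :
    fprod x (∅ : Finset T) = 1 := by simp [fprod]

@[simp] lemma fprod_singleton {R : Type*} [Monoid R] {T : Type*} [LinearOrder T] (x : T → R)
    (t : T) : fprod x ({t} : Finset T) = x t := by simp [fprod]

lemma sort_eq_of_sorted {T : Type*} [LinearOrder T] {S : Finset T} {l : List T}
    (hs : l.Pairwise (· ≤ ·)) (hv : (l : Multiset T) = S.val) : S.sort (· ≤ ·) = l :=
  List.Perm.eq_of_pairwise' (Finset.pairwise_sort _ _) hs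
    (Multiset.coe_eq_coe.mp (by rw [Finset.sort_eq, hv]))

lemma sort_union {T : Type*} [LinearOrder T] {S₁ S₂ : Finset T}
    (hlt : ∀ x ∈ S₁, ∀ y ∈ S₂, x < y) :
    (S₁ ∪ S₂).sort (· ≤ ·) = S₁.sort (· ≤ ·) ++ S₂.sort (· ≤ ·) := by
  have hdisj : Disjoint S₁ S₂ := by
    rw [Finset.disjoint_left]
    intro a ha1 ha2
    exact lt_irrefl a (hlt a ha1 a ha2)
  apply sort_eq_of_sorted
  · rw [List.pairwise_append]
    refine ⟨Finset.pairwise_sort _ _, Finset.pairwise_sort _ _, fun a ha b hb => ?_⟩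
    exact (hlt a ((Finset.mem_sort _).mp ha) b ((Finset.mem_sort _).mp hb)).le
  · rw [← Multiset.coe_add, Finset.sort_eq, Finset.sort_eq, ← Finset.disjUnion_eq_union _ _ hdisj]
    rfl

lemma fprod_union {R : Type*} [Monoid R] {T : Type*} [LinearOrder T] (x : T → R) {S₁ S₂ : Finset T}
    (hlt : ∀ a ∈ S₁, ∀ b ∈ S₂, a < b) :
    fprod x (S₁ ∪ S₂) = fprod x S₁ * fprod x S₂ := by
  unfold fprod
  rw [sort_union hlt, List.map_append, List.prod_append]

variable {R : Type*} [Ring R] [Algebra ℂ R] {T : Type*} [LinearOrder T]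

lemma d_mul_fprod_of_mem (d : T → R)
    (hd : ∀ s t, d s * d t = -(d t * d s)) (hsq : ∀ t, d t * d t = 0)
    {S : Finset T} {t : T} (ht : t ∈ S) : d t * fprod d S = 0 :=
  mul_map_prod_eq_zero d hd hsq _ t ((Finset.mem_sort _).mpr ht)

lemma insert_decomp {S : Finset T} {t : T} (ht : t ∉ S) :
    insert t S = (S.filter (· < t)) ∪ ({t} ∪ S.filter (t < ·)) := by
  ext x
  simp only [Finset.mem_insert, Finset.mem_union, Finset.mem_filter, Finset.mem_singleton]
  constructor
  · rintro (rfl | hx)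
    · exact Or.inr (Or.inl rfl)
    · rcases lt_trichotomy x t with h | rfl | h
      · exact Or.inl ⟨hx, h⟩
      · exact absurd hx ht
      · exact Or.inr (Or.inr ⟨hx, h⟩)
  · rintro (⟨hx, _⟩ | rfl | ⟨hx, _⟩)
    · exact Or.inr hx
    · exact Or.inl rfl
    · exact Or.inr hx

lemma filter_decomp {S : Finset T} {t : T} (ht : t ∉ S) :
    (S.filter (· < t)) ∪ S.filter (t < ·) = S := by
  ext x
  simp only [Finset.mem_union, Finset.mem_filter]
  constructor
  · rintro (⟨hx, _⟩ | ⟨hx, _⟩) <;> exact hx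
  · intro hx
    rcases lt_trichotomy x t with h | rfl | h
    · exact Or.inl ⟨hx, h⟩
    · exact absurd hx ht
    · exact Or.inr ⟨hx, h⟩

lemma d_mul_fprod_insert (d : T → R)
    (hd : ∀ s t, d s * d t = -(d t * d s))
    {S : Finset T} {t : T} (ht : t ∉ S) :
    d t * fprod d S = (-1:ℂ) ^ (S.filter (· < t)).card • fprod d (insert t S) := by
  have h1 : ∀ a ∈ S.filter (· < t), ∀ b ∈ ({t} ∪ S.filter (t < ·) : Finset T), a < b := by
    intro a ha b hb
    simp only [Finset.mem_filter] at ha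
    simp only [Finset.mem_union, Finset.mem_singleton, Finset.mem_filter] at hb
    rcases hb with rfl | ⟨_, hb⟩
    · exact ha.2
    · exact ha.2.trans hb
  have h2 : ∀ a ∈ S.filter (· < t), ∀ b ∈ S.filter (t < ·), a < b := by
    intro a ha b hb
    simp only [Finset.mem_filter] at ha hb
    exact ha.2.trans hb.2
  have h3 : ∀ a ∈ ({t} : Finset T), ∀ b ∈ S.filter (t < ·), a < b := by
    intro a ha b hb
    simp only [Finset.mem_singleton] at ha
    simp only [Finset.mem_filter] at hb
    exact ha ▸ hb.2
  have hpass : d t * fprod d (S.filter (· < t)) =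
      (-1:ℂ) ^ (S.filter (· < t)).card • (fprod d (S.filter (· < t)) * d t) := by
    have := pass_list (d t) (((S.filter (· < t)).sort (· ≤ ·)).map d) ?_
    · simpa [fprod, Finset.length_sort] using this
    · intro x hx
      rcases List.mem_map.mp hx with ⟨s, _, rfl⟩
      exact hd t s
  calc d t * fprod d S
      = d t * (fprod d (S.filter (· < t)) * fprod d (S.filter (t < ·))) := by
        rw [← fprod_union d h2, filter_decomp ht]
    _ = (d t * fprod d (S.filter (· < t))) * fprod d (S.filter (t < ·)) := by rw [mul_assoc]
    _ = ((-1:ℂ) ^ (S.filter (· < t)).card • (fprod d (S.filter (· < t)) * d t))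
          * fprod d (S.filter (t < ·)) := by rw [hpass]
    _ = (-1:ℂ) ^ (S.filter (· < t)).card •
          (fprod d (S.filter (· < t)) * (d t * fprod d (S.filter (t < ·)))) := by
        rw [smul_mul_assoc, mul_assoc]
    _ = (-1:ℂ) ^ (S.filter (· < t)).card • fprod d (insert t S) := by
        rw [insert_decomp ht, fprod_union d h1, fprod_union d h3, fprod_singleton]

end Fprod
section Grassmann

variable {T : Type*} {ι : Type*} [LinearOrder T]

/-- Determinant coefficient: rows indexed by the list `l`, columns by the finset `S`
in increasing order. -/
def detAux (C : ι → T → ℂ) (l : List ι) (S : Finset T) : ℂ :=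
  if h : S.card = l.length then
    Matrix.det (Matrix.of fun r c : Fin l.length => C (l.get r) (S.orderEmbOfFin h c))
  else 0

lemma rank_eq {S : Finset T} {k : ℕ} (h : S.card = k) (j : Fin k) :
    (S.filter (· < S.orderEmbOfFin h j)).card = (j : ℕ) := by
  have himg : S.filter (· < S.orderEmbOfFin h j) =
      (Finset.Iio j).image (S.orderEmbOfFin h) := by
    ext x
    simp only [Finset.mem_filter, Finset.mem_image, Finset.mem_Iio]
    constructor
    · rintro ⟨hxS, hxlt⟩
      have hx : x ∈ Set.range (S.orderEmbOfFin h) := by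
        rw [Finset.range_orderEmbOfFin]
        exact hxS
      obtain ⟨j', rfl⟩ := hx
      exact ⟨j', (S.orderEmbOfFin h).strictMono.lt_iff_lt.mp hxlt, rfl⟩
    · rintro ⟨j', hj', rfl⟩
      exact ⟨Finset.orderEmbOfFin_mem _ _ _, (S.orderEmbOfFin h).strictMono hj'⟩
  rw [himg, Finset.card_image_of_injective _ (S.orderEmbOfFin h).injective, Fin.card_Iio]

lemma filter_insert_lt {S : Finset T} (t : T) :
    (insert t S).filter (· < t) = S.filter (· < t) := by
  ext x
  simp only [Finset.mem_filter, Finset.mem_insert]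
  constructor
  · rintro ⟨rfl | hx, hlt⟩
    · exact absurd hlt (lt_irrefl x)
    · exact ⟨hx, hlt⟩
  · rintro ⟨hx, hlt⟩
    exact ⟨Or.inr hx, hlt⟩

lemma detAux_cons (C : ι → T → ℂ) (i : ι) (l : List ι) (S : Finset T) :
    detAux C (i :: l) S =
      ∑ t ∈ S, (-1:ℂ) ^ (S.filter (· < t)).card * C i t * detAux C l (S.erase t) := by
  unfold detAux
  by_cases h : S.card = (i :: l).length
  · rw [dif_pos h]
    have h' : S.card = l.length + 1 := by simpa using h
    rw [Matrix.det_succ_row_zero]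
    refine Finset.sum_bij' (fun j _ => S.orderEmbOfFin h j)
      (fun t ht => (S.orderIsoOfFin h).symm ⟨t, ht⟩) (fun j _ => Finset.orderEmbOfFin_mem _ _ _)
      (fun t ht => Finset.mem_univ _) (fun j _ => ?_) (fun t ht => ?_) (fun j _ => ?_)
    · apply (S.orderIsoOfFin h).injective
      apply Subtype.ext
      simp [Finset.coe_orderIsoOfFin_apply]
    · exact (by rw [← Finset.coe_orderIsoOfFin_apply, OrderIso.apply_symm_apply] :
        (S.orderEmbOfFin h) ((S.orderIsoOfFin h).symm ⟨t, ht⟩) = t)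
    · -- value equality
      have hco : ((S.orderEmbOfFin h j : T) ∈ S) := Finset.orderEmbOfFin_mem _ _ _
      have hce : (S.erase (S.orderEmbOfFin h j)).card = l.length := by
        rw [Finset.card_erase_of_mem hco, h']
        rfl
      rw [dif_pos hce]
      have hemb : ∀ c : Fin l.length,
          S.orderEmbOfFin h (j.succAbove c)
            = (S.erase (S.orderEmbOfFin h j)).orderEmbOfFin hce c := by
        have hmem : ∀ c : Fin l.length,
            S.orderEmbOfFin h (j.succAbove c) ∈ S.erase (S.orderEmbOfFin h j) := by
          intro c
          rw [Finset.mem_erase]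
          exact ⟨fun hEq => Fin.succAbove_ne j c ((S.orderEmbOfFin h).injective hEq),
            Finset.orderEmbOfFin_mem _ _ _⟩
        have hmono : StrictMono (fun c : Fin l.length =>
            S.orderEmbOfFin h (j.succAbove c)) :=
          (S.orderEmbOfFin h).strictMono.comp (Fin.strictMono_succAbove j)
        have := Finset.orderEmbOfFin_unique hce hmem hmono
        exact fun c => congrFun this c
      have hdet : (Matrix.of fun r c : Fin (i :: l).length =>
            C ((i :: l).get r) (S.orderEmbOfFin h c)).submatrix Fin.succ j.succAbove
          = Matrix.of fun r c : Fin l.length =>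
              C (l.get r) ((S.erase (S.orderEmbOfFin h j)).orderEmbOfFin hce c) := by
        ext r c
        simp only [Matrix.submatrix_apply, Matrix.of_apply]
        rw [← hemb c]
        rfl
      rw [hdet, rank_eq h j]
      rfl
  · rw [dif_neg h]
    have h' : S.card ≠ l.length + 1 := by simpa using h
    symm
    apply Finset.sum_eq_zero
    intro t ht
    have : (S.erase t).card ≠ l.length := by
      rw [Finset.card_erase_of_mem ht]
      intro hcontr
      apply h'
      have hpos : 0 < S.card := Finset.card_pos.mpr ⟨t, ht⟩
      omega
    rw [dif_neg this, mul_zero]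

variable [Fintype T] {R : Type*} [Ring R] [Algebra ℂ R]

lemma grassmann_expansion (d : T → R)
    (hd : ∀ s t, d s * d t = -(d t * d s)) (hsq : ∀ t, d t * d t = 0)
    (C : ι → T → ℂ) (c : ι → R) (hc : ∀ i, c i = ∑ t, C i t • d t) :
    ∀ l : List ι, (l.map c).prod = ∑ S : Finset T, detAux C l S • fprod d S
  | [] => by
    rw [List.map_nil, List.prod_nil]
    rw [Finset.sum_eq_single (∅ : Finset T)]
    · simp [detAux]
    · intro S _ hS
      have hcard : ¬ S.card = 0 := fun hcd => hS (Finset.card_eq_zero.mp hcd)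
      simp [detAux, hcard]
    · simp
  | i :: l => by
    rw [List.map_cons, List.prod_cons, grassmann_expansion d hd hsq C c hc l, hc i,
      Finset.sum_mul_sum, Finset.sum_comm]
    have step1 : ∀ S : Finset T, ∀ t : T,
        (C i t • d t) * (detAux C l S • fprod d S)
          = if t ∉ S then
              ((-1:ℂ) ^ (S.filter (· < t)).card * C i t * detAux C l S)
                • fprod d (insert t S)
            else 0 := by
      intro S t
      rw [smul_mul_smul_comm]
      by_cases ht : t ∈ S
      · rw [if_neg (not_not_intro ht), d_mul_fprod_of_mem d hd hsq ht, smul_zero]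
      · rw [if_pos ht, d_mul_fprod_insert d hd ht, smul_smul]
        ring_nf
    simp only [step1]
    have step2 : ∀ S' : Finset T,
        detAux C (i :: l) S' • fprod d S'
          = ∑ t ∈ S', ((-1:ℂ) ^ (S'.filter (· < t)).card * C i t * detAux C l (S'.erase t))
              • fprod d S' := by
      intro S'
      rw [detAux_cons, Finset.sum_smul]
    simp only [step2]
    simp only [← Finset.sum_filter]
    rw [Finset.sum_sigma' Finset.univ (fun S => Finset.univ.filter (· ∉ S))
        (fun S t => ((-1:ℂ) ^ (S.filter (· < t)).card * C i t * detAux C l S)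
          • fprod d (insert t S)),
      Finset.sum_sigma' Finset.univ (fun S' : Finset T => S')
        (fun S' t => ((-1:ℂ) ^ (S'.filter (· < t)).card * C i t * detAux C l (S'.erase t))
          • fprod d S')]
    refine Finset.sum_bij' (fun p _ => ⟨insert p.2 p.1, p.2⟩) (fun p _ => ⟨p.1.erase p.2, p.2⟩)
      ?_ ?_ ?_ ?_ ?_
    · rintro ⟨S, t⟩ hp
      simp only [Finset.mem_sigma, Finset.mem_univ, Finset.mem_filter, true_and] at hp ⊢
      exact Finset.mem_insert_self _ _
    · rintro ⟨S', t⟩ hp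
      simp only [Finset.mem_sigma, Finset.mem_univ, Finset.mem_filter, true_and] at hp ⊢
      exact Finset.notMem_erase _ _
    · rintro ⟨S, t⟩ hp
      simp only [Finset.mem_sigma, Finset.mem_univ, Finset.mem_filter, true_and] at hp
      simp [Finset.erase_insert hp]
    · rintro ⟨S', t⟩ hp
      simp only [Finset.mem_sigma, Finset.mem_univ, Finset.mem_filter, true_and] at hp
      simp [Finset.insert_erase hp]
    · rintro ⟨S, t⟩ hp
      simp only [Finset.mem_sigma, Finset.mem_univ, Finset.mem_filter, true_and] at hp
      rw [Finset.erase_insert hp, filter_insert_lt]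

end Grassmann
section GenMonoid

lemma reverse_prod_of_comm {M : Type*} [Monoid M] :
    ∀ l : List M, (∀ x ∈ l, ∀ y ∈ l, Commute x y) → l.reverse.prod = l.prod
  | [], _ => rfl
  | x :: l, h => by
    rw [List.reverse_cons, List.prod_append,
      reverse_prod_of_comm l (fun a ha b hb => h a (by simp [ha]) b (by simp [hb])),
      List.prod_singleton, List.prod_cons]
    exact (Commute.list_prod_right l x (fun y hy => h x (by simp) y (by simp [hy]))).eq.symm

lemma prod_sq_of_comm {M : Type*} [Monoid M] :
    ∀ l : List M, (∀ x ∈ l, ∀ y ∈ l, Commute x y) → (∀ x ∈ l, x * x = 1) →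
      l.prod * l.prod = 1
  | [], _, _ => by simp
  | x :: l, h, hsq => by
    have hc : Commute x l.prod :=
      Commute.list_prod_right l x (fun y hy => h x (by simp) y (by simp [hy]))
    rw [List.prod_cons]
    calc x * l.prod * (x * l.prod) = x * (l.prod * x) * l.prod := by
          rw [mul_assoc, mul_assoc, mul_assoc]
      _ = x * (x * l.prod) * l.prod := by rw [hc.eq]
      _ = (x * x) * (l.prod * l.prod) := by rw [mul_assoc, mul_assoc, mul_assoc]
      _ = 1 := by
          rw [hsq x (by simp), prod_sq_of_comm l
            (fun a ha b hb => h a (by simp [ha]) b (by simp [hb]))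
            (fun a ha => hsq a (by simp [ha])), one_mul]

lemma pow_pass {R : Type*} [Ring R] [Algebra ℂ R] (p M : R) (k : ℕ)
    (h : p * M = (-1:ℂ) ^ k • (M * p)) :
    ∀ n : ℕ, p ^ n * M = (-1:ℂ) ^ (n * k) • (M * p ^ n)
  | 0 => by simp
  | n + 1 => by
    rw [pow_succ, mul_assoc, h, mul_smul_comm, ← mul_assoc, pow_pass p M k h n,
      smul_mul_assoc, smul_smul, ← pow_add, mul_assoc, ← pow_succ]
    ring_nf

section GenRing

variable {R : Type*} [Ring R]

lemma swap_assoc {x y : R} (h : x * y = -(y * x)) (z : R) :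
    x * (y * z) = -(y * (x * z)) := by
  rw [← mul_assoc, h, neg_mul, mul_assoc]

lemma N_idem_gen {a a' : R} (hsq : a * a = 0) (hmix : a * a' = 1 - a' * a) :
    (a' * a) * (a' * a) = a' * a := by
  have h1 : (a' * a) * (a' * a) = a' * ((a * a') * a) := by noncomm_ring
  rw [h1, hmix, sub_mul, one_mul, mul_sub, mul_assoc, hsq, mul_zero, mul_zero, sub_zero]

lemma N_comm_gen {a b a' b' : R} (hab : a * b = -(b * a)) (hab' : a * b' = -(b' * a))
    (ha'b : a' * b = -(b * a')) (ha'b' : a' * b' = -(b' * a')) :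
    (a' * a) * (b' * b) = (b' * b) * (a' * a) := by
  calc (a' * a) * (b' * b) = a' * (a * (b' * b)) := by noncomm_ring
    _ = a' * (-(b' * (a * b))) := by rw [swap_assoc hab' b]
    _ = a' * (-(b' * (-(b * a)))) := by rw [hab]
    _ = a' * (b' * (b * a)) := by noncomm_ring
    _ = -(b' * (a' * (b * a))) := by rw [swap_assoc ha'b' (b * a)]
    _ = -(b' * (-(b * (a' * a)))) := by rw [swap_assoc ha'b a]
    _ = (b' * b) * (a' * a) := by noncomm_ring

lemma Nf_comm_gen {a b a' : R} (hab : a * b = -(b * a)) (ha'b : a' * b = -(b * a')) :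
    (a' * a) * b = b * (a' * a) := by
  calc (a' * a) * b = a' * (a * b) := by rw [mul_assoc]
    _ = a' * (-(b * a)) := by rw [hab]
    _ = -(a' * (b * a)) := by rw [mul_neg]
    _ = -(-(b * (a' * a))) := by rw [swap_assoc ha'b a]
    _ = b * (a' * a) := by rw [neg_neg]

lemma Q_sq_gen [Algebra ℂ R] {n : R} (h : n * n = n) :
    (1 - (2:ℂ) • n) * (1 - (2:ℂ) • n) = 1 := by
  rw [sub_mul, one_mul, mul_sub, mul_one, smul_mul_smul_comm, h]
  module

end GenRing

end GenMonoid

section CAR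

variable {m : ℕ} (f : Fin m → Mat m)
  (hff : ∀ i j : Fin m, f i * f j + f j * f i = 0)
  (hffd : ∀ i j : Fin m, f i * (f j)ᴴ + (f j)ᴴ * f i = if i = j then 1 else 0)

/-- single-mode parity factor -/
def Qop (j : Fin m) : Mat m := 1 - (2:ℂ) • ((f j)ᴴ * f j)

lemma parity_eq_fprod : parity f = fprod (Qop f) Finset.univ := rfl

section Lemmas
include hff

lemma f_sq (i : Fin m) : f i * f i = 0 := by
  have h2 : (2:ℂ) • (f i * f i) = 0 := by
    rw [two_smul]
    exact hff i i
  calc f i * f i = (2:ℂ)⁻¹ • ((2:ℂ) • (f i * f i)) := by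
        rw [smul_smul]
        norm_num
    _ = 0 := by rw [h2, smul_zero]

lemma f_swap (i j : Fin m) : f i * f j = -(f j * f i) := eq_neg_of_add_eq_zero_left (hff i j)

lemma fH_swap (i j : Fin m) : (f i)ᴴ * (f j)ᴴ = -((f j)ᴴ * (f i)ᴴ) := by
  have := congrArg Matrix.conjTranspose (f_swap f hff j i)
  simpa [Matrix.conjTranspose_mul] using this

end Lemmas

section Lemmas2
include hffd

lemma f_mix (i : Fin m) : f i * (f i)ᴴ = 1 - (f i)ᴴ * f i := by
  have := hffd i i
  rw [if_pos rfl] at this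
  exact eq_sub_of_add_eq this

lemma fd_swap {i j : Fin m} (h : i ≠ j) : f i * (f j)ᴴ = -((f j)ᴴ * f i) :=
  eq_neg_of_add_eq_zero_left (by rw [hffd i j, if_neg h])

lemma df_swap {i j : Fin m} (h : i ≠ j) : (f i)ᴴ * f j = -(f j * (f i)ᴴ) :=
  eq_neg_of_add_eq_zero_right (by rw [hffd j i, if_neg (Ne.symm h)])

end Lemmas2

include hff hffd

lemma N_idem (i : Fin m) : ((f i)ᴴ * f i) * ((f i)ᴴ * f i) = (f i)ᴴ * f i :=
  N_idem_gen (f_sq f hff i) (f_mix f hffd i)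

lemma N_comm {i j : Fin m} (h : i ≠ j) :
    Commute ((f i)ᴴ * f i) ((f j)ᴴ * f j) := by
  have h1 : f i * (f j)ᴴ = -((f j)ᴴ * f i) := fd_swap f hffd h
  have h2 : (f i)ᴴ * (f j)ᴴ = -((f j)ᴴ * (f i)ᴴ) := fH_swap f hff i j
  have h3 : f i * f j = -(f j * f i) := f_swap f hff i j
  have h4 : (f i)ᴴ * f j = -(f j * (f i)ᴴ) := df_swap f hffd h
  exact N_comm_gen h3 h1 h4 h2

lemma Q_comm (j k : Fin m) : Commute (Qop f j) (Qop f k) := by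
  rcases eq_or_ne j k with rfl | h
  · exact Commute.refl _
  · have hN : Commute ((f j)ᴴ * f j) ((f k)ᴴ * f k) := N_comm f hff hffd h
    have c1 : Commute ((2:ℂ) • ((f j)ᴴ * f j)) ((2:ℂ) • ((f k)ᴴ * f k)) :=
      (hN.smul_left _).smul_right _
    have c2 : Commute ((2:ℂ) • ((f j)ᴴ * f j)) (1 - (2:ℂ) • ((f k)ᴴ * f k)) :=
      (Commute.one_right _).sub_right c1
    exact (Commute.one_left _).sub_left c2

lemma Q_sq (j : Fin m) : Qop f j * Qop f j = 1 :=
  Q_sq_gen (N_idem f hff hffd j)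

lemma Qf_comm {i j : Fin m} (h : j ≠ i) : Qop f j * f i = f i * Qop f j := by
  have hN : ((f j)ᴴ * f j) * f i = f i * ((f j)ᴴ * f j) :=
    Nf_comm_gen (f_swap f hff j i) (df_swap f hffd (Ne.symm (Ne.symm h) : j ≠ i))
  unfold Qop
  rw [sub_mul, mul_sub, one_mul, mul_one, smul_mul_assoc, mul_smul_comm, hN]

lemma fQ_anti (i : Fin m) : f i * Qop f i = -(Qop f i * f i) := by
  have hQf : Qop f i * f i = f i := by
    unfold Qop
    rw [sub_mul, one_mul, smul_mul_assoc, mul_assoc, f_sq f hff, mul_zero, smul_zero, sub_zero]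
  have hfQ : f i * Qop f i = -(f i) := by
    unfold Qop
    rw [mul_sub, mul_one, mul_smul_comm, ← mul_assoc, f_mix f hffd, sub_mul, one_mul,
      mul_assoc, f_sq f hff, mul_zero, sub_zero]
    module
  rw [hQf, hfQ]

lemma Q_herm (j : Fin m) : (Qop f j)ᴴ = Qop f j := by
  unfold Qop
  simp [Matrix.conjTranspose_sub, Matrix.conjTranspose_smul, Matrix.conjTranspose_mul]

lemma f_Qlist (i : Fin m) : ∀ l : List (Fin m),
    f i * (l.map (Qop f)).prod = (-1:ℂ) ^ (l.count i) • ((l.map (Qop f)).prod * f i)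
  | [] => by simp
  | j :: l => by
    have ih := f_Qlist i l
    rw [List.map_cons, List.prod_cons, ← mul_assoc]
    rcases eq_or_ne j i with rfl | h
    · rw [fQ_anti f hff hffd j, neg_mul, mul_assoc, ih, mul_smul_comm, ← mul_assoc,
        ← neg_smul]
      have : l.count j + 1 = (j :: l).count j := by simp [List.count_cons]
      rw [← this, pow_succ]
      congr 1
      ring
    · rw [show f i * Qop f j = Qop f j * f i from (Qf_comm f hff hffd h).symm, mul_assoc, ih,
        mul_smul_comm, ← mul_assoc]
      congr 2
      simp [List.count_cons, h]

lemma f_parity_anti (i : Fin m) : f i * parity f = -(parity f * f i) := by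
  have h1 := f_Qlist f hff hffd i (Finset.univ.sort (· ≤ ·))
  have hcount : (Finset.univ.sort (· ≤ ·)).count i = 1 :=
    List.count_eq_one_of_mem (Finset.sort_nodup _ _)
      ((Finset.mem_sort _).mpr (Finset.mem_univ i))
  rw [hcount, pow_one, neg_one_smul] at h1
  exact h1

lemma parity_f_anti (i : Fin m) : parity f * f i = -(f i * parity f) := by
  rw [f_parity_anti f hff hffd i, neg_neg]

lemma parity_herm : (parity f)ᴴ = parity f := by
  show ((((Finset.univ.sort (· ≤ ·)).map (Qop f))).prod)ᴴ = _
  rw [Matrix.conjTranspose_list_prod, List.map_map]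
  have : Matrix.conjTranspose ∘ Qop f = Qop f := funext (Q_herm f hff hffd)
  rw [this]
  exact reverse_prod_of_comm _ (by
    intro x hx y hy
    rcases List.mem_map.mp hx with ⟨a, _, rfl⟩
    rcases List.mem_map.mp hy with ⟨b, _, rfl⟩
    exact Q_comm f hff hffd a b)

lemma parity_sq : parity f * parity f = 1 := by
  apply prod_sq_of_comm
  · intro x hx y hy
    rcases List.mem_map.mp hx with ⟨a, _, rfl⟩
    rcases List.mem_map.mp hy with ⟨b, _, rfl⟩
    exact Q_comm f hff hffd a b
  · intro x hx
    rcases List.mem_map.mp hx with ⟨a, _, rfl⟩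
    exact Q_sq f hff hffd a

lemma parity_fH_anti (i : Fin m) : parity f * (f i)ᴴ = -((f i)ᴴ * parity f) := by
  have := congrArg Matrix.conjTranspose (f_parity_anti f hff hffd i)
  simpa [Matrix.conjTranspose_mul, parity_herm f hff hffd] using this

end CAR
section PassMul

variable {R : Type*} [Ring R] [Algebra ℂ R]

lemma pass_mul {p x y : R} {k l : ℕ} (hx : p * x = (-1:ℂ) ^ k • (x * p))
    (hy : p * y = (-1:ℂ) ^ l • (y * p)) :
    p * (x * y) = (-1:ℂ) ^ (k + l) • (x * y * p) := by
  rw [← mul_assoc, hx, smul_mul_assoc, mul_assoc, hy, mul_smul_comm, smul_smul, ← pow_add,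
    ← mul_assoc]

end PassMul

section Monomials

variable {m : ℕ} (f : Fin m → Mat m)
  (hff : ∀ i j : Fin m, f i * f j + f j * f i = 0)
  (hffd : ∀ i j : Fin m, f i * (f j)ᴴ + (f j)ᴴ * f i = if i = j then 1 else 0)

include hff hffd

lemma P_pass (K : Finset (Fin m)) :
    parity f * oprod f K = (-1:ℂ) ^ K.card • (oprod f K * parity f) := by
  have h := pass_list (parity f) ((K.sort (· ≤ ·)).map f) ?_
  · simpa [oprod, Finset.length_sort] using h
  · intro x hx
    rcases List.mem_map.mp hx with ⟨k, _, rfl⟩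
    exact parity_f_anti f hff hffd k

lemma P_passH (K : Finset (Fin m)) :
    parity f * (oprod f K)ᴴ = (-1:ℂ) ^ K.card • ((oprod f K)ᴴ * parity f) := by
  have hrw : (oprod f K)ᴴ = (((K.sort (· ≤ ·)).map f).map Matrix.conjTranspose).reverse.prod :=
    Matrix.conjTranspose_list_prod _
  rw [hrw]
  have h := pass_list (parity f) ((((K.sort (· ≤ ·)).map f).map Matrix.conjTranspose).reverse) ?_
  · simpa [Finset.length_sort] using h
  · intro x hx
    rw [List.mem_reverse] at hx
    rcases List.mem_map.mp hx with ⟨y, hy, rfl⟩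
    rcases List.mem_map.mp hy with ⟨k, _, rfl⟩
    exact parity_fH_anti f hff hffd k

lemma P_pow_pass (e : ℕ) (K L : Finset (Fin m)) :
    parity f ^ e * ((oprod f K)ᴴ * oprod f L)
      = (-1:ℂ) ^ (e * (K.card + L.card)) • ((oprod f K)ᴴ * oprod f L * parity f ^ e) :=
  pow_pass _ _ _ (pass_mul (P_passH f hff hffd K) (P_pass f hff hffd L)) e

lemma parity_pow_even {n : ℕ} (h : n % 2 = 0) : parity f ^ n = 1 := by
  obtain ⟨k, rfl⟩ := (Nat.even_iff.mpr h)
  rw [← two_mul, pow_mul, sq, parity_sq f hff hffd, one_pow]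

end Monomials

section Kron

variable {m : ℕ}

lemma kron_conjT (X Y : Mat m) : (X ⊗ₖ Y)ᴴ = Xᴴ ⊗ₖ Yᴴ := by
  ext ⟨i, s⟩ ⟨j, t⟩
  simp [Matrix.conjTranspose_apply, Matrix.kroneckerMap_apply, star_mul']

lemma kron_neg_left (X Y : Mat m) : (-X) ⊗ₖ Y = -(X ⊗ₖ Y) := by
  ext ⟨i, s⟩ ⟨j, t⟩
  simp [Matrix.kroneckerMap_apply]

lemma kron_smul_left (z : ℂ) (X Y : Mat m) : (z • X) ⊗ₖ Y = z • (X ⊗ₖ Y) := by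
  ext ⟨i, s⟩ ⟨j, t⟩
  simp [Matrix.kroneckerMap_apply, mul_assoc]

variable (f : Fin m → Mat m)

lemma list_kron_one : ∀ l : List (Fin m),
    (l.map (fun i => f i ⊗ₖ (1 : Mat m))).prod = (l.map f).prod ⊗ₖ (1 : Mat m)
  | [] => by
    simp [Matrix.one_kronecker_one]
  | x :: l => by
    rw [List.map_cons, List.prod_cons, List.map_cons, List.prod_cons, list_kron_one l,
      ← Matrix.mul_kronecker_mul, one_mul]

lemma oprod_aOp (K : Finset (Fin m)) : oprod (aOp f) K = oprod f K ⊗ₖ (1 : Mat m) :=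
  list_kron_one f _

lemma list_kron_P : ∀ l : List (Fin m),
    (l.map (fun i => parity f ⊗ₖ f i)).prod = (parity f ^ l.length) ⊗ₖ (l.map f).prod
  | [] => by
    simp [Matrix.one_kronecker_one]
  | x :: l => by
    rw [List.map_cons, List.prod_cons, List.map_cons, List.prod_cons, list_kron_P l,
      ← Matrix.mul_kronecker_mul, List.length_cons, ← pow_succ']

lemma oprod_bOp (Ω : Finset (Fin m)) :
    oprod (bOp f) Ω = (parity f ^ Ω.card) ⊗ₖ oprod f Ω := by
  have := list_kron_P f (Ω.sort (· ≤ ·))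
  simp only [Finset.length_sort] at this
  exact this

variable (hff : ∀ i j : Fin m, f i * f j + f j * f i = 0)
  (hffd : ∀ i j : Fin m, f i * (f j)ᴴ + (f j)ᴴ * f i = if i = j then 1 else 0)

include hff hffd

lemma a_a_anti (i j : Fin m) : aOp f i * aOp f j = -(aOp f j * aOp f i) := by
  unfold aOp
  rw [← Matrix.mul_kronecker_mul, ← Matrix.mul_kronecker_mul, one_mul, f_swap f hff i j,
    kron_neg_left]

lemma b_b_anti (i j : Fin m) : bOp f i * bOp f j = -(bOp f j * bOp f i) := by
  unfold bOp
  rw [← Matrix.mul_kronecker_mul, ← Matrix.mul_kronecker_mul, parity_sq f hff hffd,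
    f_swap f hff i j]
  ext ⟨r, s⟩ ⟨u, v⟩
  simp [Matrix.kroneckerMap_apply]

lemma a_b_anti (i j : Fin m) : aOp f i * bOp f j = -(bOp f j * aOp f i) := by
  unfold aOp bOp
  rw [← Matrix.mul_kronecker_mul, ← Matrix.mul_kronecker_mul, one_mul, mul_one,
    f_parity_anti f hff hffd i, kron_neg_left]

lemma a_sq (i : Fin m) : aOp f i * aOp f i = 0 := by
  unfold aOp
  rw [← Matrix.mul_kronecker_mul, one_mul, f_sq f hff, Matrix.zero_kronecker]

lemma b_sq (i : Fin m) : bOp f i * bOp f i = 0 := by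
  unfold bOp
  rw [← Matrix.mul_kronecker_mul, f_sq f hff, Matrix.kronecker_zero]

/-- the combined family of operators, indexed by the lexicographic sum -/
def dOp (t : Fin m ⊕ₗ Fin m) : Mat2 m := Sum.elim (aOp f) (bOp f) (ofLex t)

omit hff hffd in
lemma dOp_inl (k : Fin m) : dOp f (toLex (Sum.inl k)) = aOp f k := rfl

omit hff hffd in
lemma dOp_inr (k : Fin m) : dOp f (toLex (Sum.inr k)) = bOp f k := rfl

lemma dOp_anti (s t : Fin m ⊕ₗ Fin m) : dOp f s * dOp f t = -(dOp f t * dOp f s) := by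
  have key : ∀ x y : Fin m ⊕ Fin m,
      Sum.elim (aOp f) (bOp f) x * Sum.elim (aOp f) (bOp f) y
        = -(Sum.elim (aOp f) (bOp f) y * Sum.elim (aOp f) (bOp f) x) := by
    rintro (x | x) (y | y) <;> simp only [Sum.elim_inl, Sum.elim_inr]
    · exact a_a_anti f hff hffd x y
    · exact a_b_anti f hff hffd x y
    · rw [a_b_anti f hff hffd y x, neg_neg]
    · exact b_b_anti f hff hffd x y
  exact key (ofLex s) (ofLex t)

lemma dOp_sq (t : Fin m ⊕ₗ Fin m) : dOp f t * dOp f t = 0 := by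
  have key : ∀ x : Fin m ⊕ Fin m,
      Sum.elim (aOp f) (bOp f) x * Sum.elim (aOp f) (bOp f) x = 0 := by
    rintro (x | x) <;> simp only [Sum.elim_inl, Sum.elim_inr]
    · exact a_sq f hff hffd x
    · exact b_sq f hff hffd x
  exact key (ofLex t)

end Kron
section LexStuff

variable {m : ℕ}

instance : Fintype (Fin m ⊕ₗ Fin m) := Fintype.ofEquiv _ toLex
instance : DecidableEq (Fin m ⊕ₗ Fin m) := Equiv.decidableEq ofLex

/-- The finset of `Fin m ⊕ₗ Fin m` corresponding to a pair of finsets. -/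
def lexSet (L Ω : Finset (Fin m)) : Finset (Fin m ⊕ₗ Fin m) :=
  (L.disjSum Ω).map toLex.toEmbedding

lemma card_lexSet (L Ω : Finset (Fin m)) : (lexSet L Ω).card = L.card + Ω.card := by
  rw [lexSet, Finset.card_map, Finset.card_disjSum]

lemma mem_lexSet {L Ω : Finset (Fin m)} {x : Fin m ⊕ₗ Fin m} :
    x ∈ lexSet L Ω ↔ (∃ a ∈ L, toLex (Sum.inl a) = x) ∨ ∃ b ∈ Ω, toLex (Sum.inr b) = x := by
  simp only [lexSet, Finset.mem_map, Finset.mem_disjSum, Equiv.toEmbedding_apply]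
  constructor
  · rintro ⟨y, (⟨a, ha, rfl⟩ | ⟨b, hb, rfl⟩), rfl⟩
    · exact Or.inl ⟨a, ha, rfl⟩
    · exact Or.inr ⟨b, hb, rfl⟩
  · rintro (⟨a, ha, rfl⟩ | ⟨b, hb, rfl⟩)
    · exact ⟨Sum.inl a, Or.inl ⟨a, ha, rfl⟩, rfl⟩
    · exact ⟨Sum.inr b, Or.inr ⟨b, hb, rfl⟩, rfl⟩

/-- Pairs of finsets are equivalent to finsets of the lexicographic sum. -/
def pairEquiv : Finset (Fin m) × Finset (Fin m) ≃ Finset (Fin m ⊕ₗ Fin m) where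
  toFun p := lexSet p.1 p.2
  invFun S := ((S.map ofLex.toEmbedding).toLeft, (S.map ofLex.toEmbedding).toRight)
  left_inv p := by
    have hmap : Finset.map ofLex.toEmbedding (lexSet p.1 p.2) = p.1.disjSum p.2 := by
      rw [lexSet, Finset.map_map]
      have hrefl : (toLex.toEmbedding.trans ofLex.toEmbedding)
          = Function.Embedding.refl (Fin m ⊕ Fin m) := by
        ext x
        rfl
      rw [hrefl, Finset.map_refl]
    show ((Finset.map ofLex.toEmbedding (lexSet p.1 p.2)).toLeft,
        (Finset.map ofLex.toEmbedding (lexSet p.1 p.2)).toRight) = p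
    rw [hmap, Finset.toLeft_disjSum, Finset.toRight_disjSum]
  right_inv S := by
    show lexSet (S.map ofLex.toEmbedding).toLeft (S.map ofLex.toEmbedding).toRight = S
    rw [lexSet, Finset.toLeft_disjSum_toRight, Finset.map_map]
    have h2 : (ofLex.toEmbedding.trans toLex.toEmbedding)
        = Function.Embedding.refl (Fin m ⊕ₗ Fin m) := by
      ext x
      rfl
    rw [h2, Finset.map_refl]

lemma sum_lexSet {β : Type*} [AddCommMonoid β] (g : Finset (Fin m ⊕ₗ Fin m) → β) :
    (∑ S : Finset (Fin m ⊕ₗ Fin m), g S)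
      = ∑ L : Finset (Fin m), ∑ Ω : Finset (Fin m), g (lexSet L Ω) := by
  rw [← Equiv.sum_comp (pairEquiv (m := m)) g, Fintype.sum_prod_type]
  rfl

lemma sort_lexSet (L Ω : Finset (Fin m)) :
    (lexSet L Ω).sort (· ≤ ·)
      = (L.sort (· ≤ ·)).map (fun a => toLex (Sum.inl a))
        ++ (Ω.sort (· ≤ ·)).map (fun b => toLex (Sum.inr b)) := by
  apply sort_eq_of_sorted
  · rw [List.pairwise_append]
    refine ⟨?_, ?_, ?_⟩
    · exact List.Pairwise.map _ (fun a b hab => Sum.Lex.inl_le_inl_iff.mpr hab)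
        (Finset.pairwise_sort _ _)
    · exact List.Pairwise.map _ (fun a b hab => Sum.Lex.inr_le_inr_iff.mpr hab)
        (Finset.pairwise_sort _ _)
    · intro x hx y hy
      rcases List.mem_map.mp hx with ⟨a, _, rfl⟩
      rcases List.mem_map.mp hy with ⟨b, _, rfl⟩
      exact Sum.Lex.inl_le_inr a b
  · have hval : (lexSet L Ω).val
        = Multiset.map (fun a => toLex (Sum.inl a)) L.val
          + Multiset.map (fun b => toLex (Sum.inr b)) Ω.val := by
      rw [lexSet, Finset.map_val, Finset.val_disjSum]
      show Multiset.map (⇑toLex) (Multiset.map Sum.inl L.val + Multiset.map Sum.inr Ω.val) = _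
      rw [Multiset.map_add, Multiset.map_map, Multiset.map_map]
      rfl
    rw [hval, ← Finset.sort_eq L (· ≤ ·), ← Finset.sort_eq Ω (· ≤ ·)]
    rw [Multiset.map_coe, Multiset.map_coe, ← Multiset.coe_add]

lemma fprod_lexSet {R : Type*} [Monoid R] (x : (Fin m ⊕ₗ Fin m) → R) (L Ω : Finset (Fin m)) :
    fprod x (lexSet L Ω)
      = fprod (fun a => x (toLex (Sum.inl a))) L * fprod (fun b => x (toLex (Sum.inr b))) Ω := by
  unfold fprod
  rw [sort_lexSet, List.map_append, List.prod_append, List.map_map, List.map_map]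
  rfl

lemma lexSet_orderEmbOfFin (L Ω : Finset (Fin m)) {n : ℕ} (hh : L.card + Ω.card = n)
    (h : (lexSet L Ω).card = n) (c : Fin n) :
    (lexSet L Ω).orderEmbOfFin h c
      = Sum.elim (fun l => toLex (Sum.inl (L.orderEmbOfFin rfl l)))
          (fun w => toLex (Sum.inr (Ω.orderEmbOfFin rfl w)))
          (finSumFinEquiv.symm (Fin.cast hh.symm c)) := by
  have hmem : ∀ c : Fin n,
      Sum.elim (fun l => toLex (Sum.inl (L.orderEmbOfFin rfl l)))
        (fun w => toLex (Sum.inr (Ω.orderEmbOfFin rfl w)))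
        (finSumFinEquiv.symm (Fin.cast hh.symm c)) ∈ lexSet L Ω := by
    intro c
    rcases hsplit : finSumFinEquiv.symm (Fin.cast hh.symm c) with l | w
    · rw [Sum.elim_inl]
      exact mem_lexSet.mpr (Or.inl ⟨_, Finset.orderEmbOfFin_mem _ _ _, rfl⟩)
    · rw [Sum.elim_inr]
      exact mem_lexSet.mpr (Or.inr ⟨_, Finset.orderEmbOfFin_mem _ _ _, rfl⟩)
  have hmono : StrictMono (fun c : Fin n =>
      Sum.elim (fun l => toLex (Sum.inl (L.orderEmbOfFin rfl l)))
        (fun w => toLex (Sum.inr (Ω.orderEmbOfFin rfl w)))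
        (finSumFinEquiv.symm (Fin.cast hh.symm c))) := by
    intro c1 c2 hlt
    simp only
    have hv1 : ((finSumFinEquiv (finSumFinEquiv.symm (Fin.cast hh.symm c1))) : ℕ) = (c1 : ℕ) := by
      rw [Equiv.apply_symm_apply]
      rfl
    have hv2 : ((finSumFinEquiv (finSumFinEquiv.symm (Fin.cast hh.symm c2))) : ℕ) = (c2 : ℕ) := by
      rw [Equiv.apply_symm_apply]
      rfl
    rcases h1 : finSumFinEquiv.symm (Fin.cast hh.symm c1) with l1 | w1 <;>
      rcases h2 : finSumFinEquiv.symm (Fin.cast hh.symm c2) with l2 | w2 <;>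
      rw [h1] at hv1 <;> rw [h2] at hv2 <;>
      simp only [finSumFinEquiv_apply_left, finSumFinEquiv_apply_right,
        Fin.coe_castAdd, Fin.coe_natAdd] at hv1 hv2 <;>
      simp only [Sum.elim_inl, Sum.elim_inr]
    · refine Sum.Lex.inl_lt_inl_iff.mpr ((L.orderEmbOfFin rfl).strictMono ?_)
      rw [Fin.lt_def]
      omega
    · exact Sum.Lex.inl_lt_inr _ _
    · exfalso
      have := l2.isLt
      have hc := (Fin.lt_def.mp hlt)
      omega
    · refine Sum.Lex.inr_lt_inr_iff.mpr ((Ω.orderEmbOfFin rfl).strictMono ?_)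
      rw [Fin.lt_def]
      have hc := (Fin.lt_def.mp hlt)
      omega
  have huniq := Finset.orderEmbOfFin_unique h hmem hmono
  exact (congrFun huniq c).symm

end LexStuff
section Match

variable {m : ℕ}

lemma detAux_lexSet (A B : Matrix (Fin m) (Fin m) ℂ) (I L Ω : Finset (Fin m)) :
    detAux (fun i t => Sum.elim (A i) (B i) (ofLex t)) (I.sort (· ≤ ·)) (lexSet L Ω)
      = concatDet A B I L Ω := by
  have hlen : (I.sort (· ≤ ·)).length = I.card := Finset.length_sort _
  unfold detAux concatDet
  by_cases h : L.card + Ω.card = I.card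
  · have h1 : (lexSet L Ω).card = (I.sort (· ≤ ·)).length := by
      rw [card_lexSet, hlen, h]
    rw [dif_pos h1, dif_pos h]
    have hh : L.card + Ω.card = (I.sort (· ≤ ·)).length := by rw [hlen, h]
    have hM : (Matrix.of fun r c : Fin (I.sort (· ≤ ·)).length =>
          (fun (i : Fin m) (t : Fin m ⊕ₗ Fin m) => Sum.elim (A i) (B i) (ofLex t))
            ((I.sort (· ≤ ·)).get r) ((lexSet L Ω).orderEmbOfFin h1 c))
        = (Matrix.of fun r c : Fin I.card =>
            Sum.elim
              (fun l => A (I.orderIsoOfFin rfl r) (L.orderIsoOfFin rfl l))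
              (fun w => B (I.orderIsoOfFin rfl r) (Ω.orderIsoOfFin rfl w))
              (finSumFinEquiv.symm (Fin.cast h.symm c))).submatrix
            (finCongr hlen) (finCongr hlen) := by
      ext r c
      rw [Matrix.submatrix_apply, Matrix.of_apply, Matrix.of_apply,
        lexSet_orderEmbOfFin L Ω hh h1 c]
      have hcast : Fin.cast h.symm (finCongr hlen c) = Fin.cast hh.symm c := rfl
      rw [hcast]
      rcases hsplit : finSumFinEquiv.symm (Fin.cast hh.symm c) with l | w
      · rfl
      · rfl
    rw [hM, Matrix.det_submatrix_equiv_self]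
  · have h1 : ¬ ((lexSet L Ω).card = (I.sort (· ≤ ·)).length) := by
      rw [card_lexSet, hlen]
      exact h
    rw [dif_neg h1, dif_neg h]

lemma ptrace2_kron (X Y : Mat m) : ptrace2 (X ⊗ₖ Y) = Y.trace • X := by
  ext i j
  simp only [ptrace2, Matrix.of_apply, Matrix.kroneckerMap_apply, Matrix.smul_apply,
    Matrix.trace, Matrix.diag, smul_eq_mul]
  rw [← Finset.mul_sum, mul_comm]

lemma ptrace2_sum {γ : Type*} (s : Finset γ) (M : γ → Mat2 m) :
    ptrace2 (∑ x ∈ s, M x) = ∑ x ∈ s, ptrace2 (M x) := by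
  ext i j
  simp only [ptrace2, Matrix.of_apply, Matrix.sum_apply]
  rw [Finset.sum_comm]

lemma ptrace2_smul (c : ℂ) (M : Mat2 m) : ptrace2 (c • M) = c • ptrace2 M := by
  ext i j
  simp only [ptrace2, Matrix.of_apply, Matrix.smul_apply, smul_eq_mul, Finset.mul_sum]

lemma conjU_one (U : Mat2 m) (hU1 : Uᴴ * U = 1) : Uᴴ * 1 * U = 1 := by
  rw [mul_one, hU1]

lemma conjU_mul (U : Mat2 m) (hU2 : U * Uᴴ = 1) (X Y : Mat2 m) :
    Uᴴ * (X * Y) * U = (Uᴴ * X * U) * (Uᴴ * Y * U) := by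
  have cancel : ∀ Z : Mat2 m, U * (Uᴴ * Z) = Z := fun Z => by
    rw [← mul_assoc, hU2, one_mul]
  simp only [mul_assoc]
  rw [cancel]

lemma conjU_adj (U : Mat2 m) (X : Mat2 m) : Uᴴ * Xᴴ * U = (Uᴴ * X * U)ᴴ := by
  rw [Matrix.conjTranspose_mul, Matrix.conjTranspose_mul, Matrix.conjTranspose_conjTranspose,
    mul_assoc]

lemma conjU_list (U : Mat2 m) (hU1 : Uᴴ * U = 1) (hU2 : U * Uᴴ = 1) (g : Fin m → Mat2 m) :
    ∀ l : List (Fin m), Uᴴ * (l.map g).prod * U = (l.map (fun i => Uᴴ * g i * U)).prod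
  | [] => by simpa using conjU_one U hU1
  | x :: l => by
    rw [List.map_cons, List.prod_cons, List.map_cons, List.prod_cons,
      ← conjU_list U hU1 hU2 g l]
    exact conjU_mul U hU2 _ _

end Match

section GamLemmas

variable {m : ℕ} (f : Fin m → Mat m) (σ : Mat m)

lemma Gam_trace (Ξ Ω : Finset (Fin m)) :
    Gam f σ Ξ Ω = (σ * ((oprod f Ξ)ᴴ * oprod f Ω)).trace := by
  rw [Gam, mul_assoc]

lemma Gam_empty : Gam f σ ∅ ∅ = σ.trace := by
  simp [Gam, oprod, Finset.sort_empty]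

variable (hff : ∀ i j : Fin m, f i * f j + f j * f i = 0)
  (hffd : ∀ i j : Fin m, f i * (f j)ᴴ + (f j)ᴴ * f i = if i = j then 1 else 0)
  (hσeven : parity f * σ = σ * parity f)

include hff hffd hσeven

lemma Gam_odd_zero {Ξ Ω : Finset (Fin m)} (hodd : (Ξ.card + Ω.card) % 2 = 1) :
    Gam f σ Ξ Ω = 0 := by
  set M := (oprod f Ξ)ᴴ * oprod f Ω with hM
  have hpass : parity f * M = (-1:ℂ) ^ (Ξ.card + Ω.card) • (M * parity f) :=
    pass_mul (P_passH f hff hffd Ξ) (P_pass f hff hffd Ω)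
  have hPP : parity f * parity f = 1 := parity_sq f hff hffd
  have hins : σ * parity f * (parity f * M) = σ * M := by
    calc σ * parity f * (parity f * M) = σ * (parity f * parity f) * M := by
          simp only [mul_assoc]
      _ = σ * M := by rw [hPP, mul_one]
  have key : (σ * M).trace = (-1:ℂ) ^ (Ξ.card + Ω.card) * (σ * M).trace := by
    calc (σ * M).trace = (σ * parity f * (parity f * M)).trace := by rw [hins]
      _ = (-1:ℂ) ^ (Ξ.card + Ω.card) * (σ * parity f * (M * parity f)).trace := by
          rw [hpass, mul_smul_comm, Matrix.trace_smul, smul_eq_mul]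
      _ = (-1:ℂ) ^ (Ξ.card + Ω.card) * ((σ * parity f * M) * parity f).trace := by
          rw [mul_assoc (σ * parity f) M (parity f)]
      _ = (-1:ℂ) ^ (Ξ.card + Ω.card) * (parity f * (σ * parity f * M)).trace := by
          rw [Matrix.trace_mul_comm]
      _ = (-1:ℂ) ^ (Ξ.card + Ω.card) * (σ * M).trace := by
          have h3 : parity f * (σ * parity f * M) = σ * M := by
            simp only [← mul_assoc]
            rw [hσeven, mul_assoc σ (parity f) (parity f), hPP, mul_one, hM]
          rw [h3]
  have hneg : (-1:ℂ) ^ (Ξ.card + Ω.card) = -1 := Odd.neg_one_pow (Nat.odd_iff.mpr hodd)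
  rw [hneg, neg_one_mul] at key
  rw [Gam_trace]
  have h2 : (σ * M).trace + (σ * M).trace = 0 := by
    nth_rewrite 1 [key]
    ring
  have := add_self_eq_zero.mp h2
  exact this

end GamLemmas
section Main

variable {m : ℕ}

lemma PhiStar_one (U : Mat2 m) (σ : Mat m) (hU1 : Uᴴ * U = 1) :
    PhiStar U σ 1 = σ.trace • (1 : Mat m) := by
  unfold PhiStar
  rw [Matrix.one_kronecker_one, mul_one, mul_assoc, hU1, mul_one, ptrace2_kron]

lemma LStar_eq (U : Mat2 m) (σ : Mat m) (hU1 : Uᴴ * U = 1) (X : Mat m) :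
    LStar U σ X = PhiStar U σ X - σ.trace • X := by
  unfold LStar
  rw [PhiStar_one U σ hU1, smul_mul_assoc, one_mul, mul_smul_comm, mul_one]
  module

lemma parity_pow_herm (f : Fin m → Mat m)
    (hff : ∀ i j : Fin m, f i * f j + f j * f i = 0)
    (hffd : ∀ i j : Fin m, f i * (f j)ᴴ + (f j)ᴴ * f i = if i = j then 1 else 0) (n : ℕ) :
    (parity f ^ n)ᴴ = parity f ^ n := by
  rw [Matrix.conjTranspose_pow, parity_herm f hff hffd]

lemma PhiStar_monomials (f : Fin m → Mat m)
    (hff : ∀ i j : Fin m, f i * f j + f j * f i = 0)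
    (hffd : ∀ i j : Fin m, f i * (f j)ᴴ + (f j)ᴴ * f i = if i = j then 1 else 0)
    (σ : Mat m) (hσeven : parity f * σ = σ * parity f)
    (A B : Matrix (Fin m) (Fin m) ℂ)
    (U : Mat2 m) (hU1 : Uᴴ * U = 1) (hU2 : U * Uᴴ = 1)
    (hUact : ∀ i : Fin m,
      Uᴴ * aOp f i * U = (∑ k, A i k • aOp f k) + (∑ k, B i k • bOp f k))
    (I J : Finset (Fin m)) :
    PhiStar U σ ((oprod f J)ᴴ * oprod f I)
      = ∑ K : Finset (Fin m), ∑ L : Finset (Fin m), ∑ Ξ : Finset (Fin m), ∑ Ω : Finset (Fin m),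
          (if K.card + Ξ.card = J.card ∧ L.card + Ω.card = I.card
              ∧ (Ξ.card + Ω.card) % 2 = 0 then
            ((-1 : ℂ) ^ (Ξ.card * (K.card + L.card))
              * (starRingEnd ℂ) (concatDet A B J K Ξ)
              * Gam f σ Ξ Ω
              * concatDet A B I L Ω) • ((oprod f K)ᴴ * oprod f L)
          else 0) := by
  set C : Fin m → (Fin m ⊕ₗ Fin m) → ℂ := fun i t => Sum.elim (A i) (B i) (ofLex t) with hC
  have hc : ∀ i : Fin m, Uᴴ * aOp f i * U = ∑ t : Fin m ⊕ₗ Fin m, C i t • dOp f t := by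
    intro i
    rw [hUact i]
    rw [show (∑ t : Fin m ⊕ₗ Fin m, C i t • dOp f t)
        = ∑ x : Fin m ⊕ Fin m, C i (toLex x) • dOp f (toLex x) from
      (Equiv.sum_comp toLex (fun t => C i t • dOp f t)).symm]
    rw [Fintype.sum_sum_type]
    rfl
  have expand : ∀ W : Finset (Fin m), Uᴴ * ((oprod f W) ⊗ₖ (1 : Mat m)) * U
      = ∑ S : Finset (Fin m ⊕ₗ Fin m), detAux C (W.sort (· ≤ ·)) S • fprod (dOp f) S := by
    intro W
    rw [← oprod_aOp]
    rw [show oprod (aOp f) W = ((W.sort (· ≤ ·)).map (aOp f)).prod from rfl]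
    rw [conjU_list U hU1 hU2 (aOp f) (W.sort (· ≤ ·))]
    exact grassmann_expansion (dOp f) (dOp_anti f hff hffd) (dOp_sq f hff hffd) C
      (fun i => Uᴴ * aOp f i * U) hc (W.sort (· ≤ ·))
  have hX : (((oprod f J)ᴴ * oprod f I) ⊗ₖ (1 : Mat m))
      = ((oprod f J) ⊗ₖ (1 : Mat m))ᴴ * ((oprod f I) ⊗ₖ (1 : Mat m)) := by
    rw [kron_conjT, Matrix.conjTranspose_one, ← Matrix.mul_kronecker_mul, one_mul]
  have hconj : Uᴴ * (((oprod f J)ᴴ * oprod f I) ⊗ₖ (1 : Mat m)) * U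
      = (∑ S : Finset (Fin m ⊕ₗ Fin m),
            (starRingEnd ℂ) (detAux C (J.sort (· ≤ ·)) S) • (fprod (dOp f) S)ᴴ)
        * (∑ S : Finset (Fin m ⊕ₗ Fin m),
            detAux C (I.sort (· ≤ ·)) S • fprod (dOp f) S) := by
    rw [hX, conjU_mul U hU2, conjU_adj U, expand J, expand I, Matrix.conjTranspose_sum]
    congr 1
    refine Finset.sum_congr rfl fun S _ => ?_
    rw [Matrix.conjTranspose_smul, starRingEnd_apply]
  have step0 : PhiStar U σ ((oprod f J)ᴴ * oprod f I)
      = ptrace2 ((((1 : Mat m) ⊗ₖ σ))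
          * (Uᴴ * (((oprod f J)ᴴ * oprod f I) ⊗ₖ (1 : Mat m)) * U)) := by
    unfold PhiStar
    simp only [mul_assoc]
  rw [step0, hconj, Finset.sum_mul_sum, Finset.mul_sum, ptrace2_sum]
  have inner : ∀ S : Finset (Fin m ⊕ₗ Fin m),
      ptrace2 (((1 : Mat m) ⊗ₖ σ) * ∑ S' : Finset (Fin m ⊕ₗ Fin m),
          ((starRingEnd ℂ) (detAux C (J.sort (· ≤ ·)) S) • (fprod (dOp f) S)ᴴ)
            * (detAux C (I.sort (· ≤ ·)) S' • fprod (dOp f) S'))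
        = ∑ S' : Finset (Fin m ⊕ₗ Fin m),
            ((starRingEnd ℂ) (detAux C (J.sort (· ≤ ·)) S) * detAux C (I.sort (· ≤ ·)) S')
              • ptrace2 (((1 : Mat m) ⊗ₖ σ) * ((fprod (dOp f) S)ᴴ * fprod (dOp f) S')) := by
    intro S
    rw [Finset.mul_sum, ptrace2_sum]
    refine Finset.sum_congr rfl fun S' _ => ?_
    rw [smul_mul_smul_comm, mul_smul_comm, ptrace2_smul]
  simp only [inner]
  rw [sum_lexSet]
  refine Finset.sum_congr rfl fun K _ => ?_
  have inner2 : ∀ Ξ : Finset (Fin m),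
      (∑ S' : Finset (Fin m ⊕ₗ Fin m),
        ((starRingEnd ℂ) (detAux C (J.sort (· ≤ ·)) (lexSet K Ξ))
            * detAux C (I.sort (· ≤ ·)) S')
          • ptrace2 (((1 : Mat m) ⊗ₖ σ)
              * ((fprod (dOp f) (lexSet K Ξ))ᴴ * fprod (dOp f) S')))
      = ∑ L : Finset (Fin m), ∑ Ω : Finset (Fin m),
          ((starRingEnd ℂ) (detAux C (J.sort (· ≤ ·)) (lexSet K Ξ))
              * detAux C (I.sort (· ≤ ·)) (lexSet L Ω))
            • ptrace2 (((1 : Mat m) ⊗ₖ σ)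
                * ((fprod (dOp f) (lexSet K Ξ))ᴴ * fprod (dOp f) (lexSet L Ω))) :=
    fun Ξ => sum_lexSet _
  simp only [inner2]
  rw [Finset.sum_comm]
  refine Finset.sum_congr rfl fun L _ => Finset.sum_congr rfl fun Ξ _ =>
    Finset.sum_congr rfl fun Ω _ => ?_
  -- per-term identification
  have hfprod : ∀ W Θ : Finset (Fin m), fprod (dOp f) (lexSet W Θ)
      = (oprod f W * parity f ^ Θ.card) ⊗ₖ oprod f Θ := by
    intro W Θ
    rw [fprod_lexSet]
    rw [show fprod (fun a => dOp f (toLex (Sum.inl a))) W = oprod (aOp f) W from rfl,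
      show fprod (fun b => dOp f (toLex (Sum.inr b))) Θ = oprod (bOp f) Θ from rfl,
      oprod_aOp, oprod_bOp, ← Matrix.mul_kronecker_mul, one_mul]
  by_cases hJc : K.card + Ξ.card = J.card
  case neg =>
    have hz : detAux C (J.sort (· ≤ ·)) (lexSet K Ξ) = 0 := by
      unfold detAux
      rw [dif_neg]
      rw [card_lexSet, Finset.length_sort]
      exact hJc
    rw [hz, map_zero, zero_mul, zero_smul, if_neg (by tauto)]
  case pos =>
  by_cases hIc : L.card + Ω.card = I.card
  case neg =>
    have hz : detAux C (I.sort (· ≤ ·)) (lexSet L Ω) = 0 := by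
      unfold detAux
      rw [dif_neg]
      rw [card_lexSet, Finset.length_sort]
      exact hIc
    rw [hz, mul_zero, zero_smul, if_neg (by tauto)]
  case pos =>
  -- compute the partial trace
  have hmat : ptrace2 (((1 : Mat m) ⊗ₖ σ)
        * ((fprod (dOp f) (lexSet K Ξ))ᴴ * fprod (dOp f) (lexSet L Ω)))
      = Gam f σ Ξ Ω • ((parity f ^ Ξ.card * (oprod f K)ᴴ)
          * (oprod f L * parity f ^ Ω.card)) := by
    rw [hfprod K Ξ, hfprod L Ω, kron_conjT, Matrix.conjTranspose_mul,
      parity_pow_herm f hff hffd, ← Matrix.mul_kronecker_mul, ← Matrix.mul_kronecker_mul,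
      one_mul, ptrace2_kron, Gam_trace]
  rw [hmat]
  by_cases hpar : (Ξ.card + Ω.card) % 2 = 0
  case neg =>
    have hodd : (Ξ.card + Ω.card) % 2 = 1 := by omega
    rw [Gam_odd_zero f σ hff hffd hσeven hodd, zero_smul, smul_zero, if_neg (by tauto)]
  case pos =>
  rw [if_pos ⟨hJc, hIc, hpar⟩]
  have hmove : (parity f ^ Ξ.card * (oprod f K)ᴴ) * (oprod f L * parity f ^ Ω.card)
      = (-1:ℂ) ^ (Ξ.card * (K.card + L.card)) • ((oprod f K)ᴴ * oprod f L) := by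
    calc (parity f ^ Ξ.card * (oprod f K)ᴴ) * (oprod f L * parity f ^ Ω.card)
        = (parity f ^ Ξ.card * ((oprod f K)ᴴ * oprod f L)) * parity f ^ Ω.card := by
          simp only [mul_assoc]
      _ = ((-1:ℂ) ^ (Ξ.card * (K.card + L.card))
            • ((oprod f K)ᴴ * oprod f L * parity f ^ Ξ.card)) * parity f ^ Ω.card := by
          rw [P_pow_pass f hff hffd]
      _ = (-1:ℂ) ^ (Ξ.card * (K.card + L.card))
            • ((oprod f K)ᴴ * oprod f L * (parity f ^ Ξ.card * parity f ^ Ω.card)) := by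
          rw [smul_mul_assoc]
          simp only [mul_assoc]
      _ = (-1:ℂ) ^ (Ξ.card * (K.card + L.card)) • ((oprod f K)ᴴ * oprod f L) := by
          rw [← pow_add, parity_pow_even f hff hffd hpar, mul_one]
  rw [hmove, detAux_lexSet A B J K Ξ, detAux_lexSet A B I L Ω, smul_smul, smul_smul]
  congr 1
  ring

end Main
/-- Action of the GKSL generator on normally ordered monomials for an even
environment state. -/
theorem LStar_on_monomials_even_sigma (f : Fin m → Mat m)
    (hff : ∀ i j : Fin m, f i * f j + f j * f i = 0)
    (hffd : ∀ i j : Fin m, f i * (f j)ᴴ + (f j)ᴴ * f i = if i = j then 1 else 0)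
    (σ : Mat m) (hσherm : σᴴ = σ) (hσpos : σ.PosSemidef)
    (hσeven : parity f * σ = σ * parity f)
    (A B : Matrix (Fin m) (Fin m) ℂ) (hAB : A * Aᴴ + B * Bᴴ = 1)
    (U : Mat2 m) (hU1 : Uᴴ * U = 1) (hU2 : U * Uᴴ = 1)
    (hUact : ∀ i : Fin m,
      Uᴴ * aOp f i * U = (∑ k, A i k • aOp f k) + (∑ k, B i k • bOp f k))
    (I J : Finset (Fin m)) :
    LStar U σ ((oprod f J)ᴴ * oprod f I)
      =
    (∑ K : Finset (Fin m), ∑ L : Finset (Fin m), ∑ Ξ : Finset (Fin m), ∑ Ω : Finset (Fin m),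
      if K.card + Ξ.card = J.card ∧ L.card + Ω.card = I.card ∧ (Ξ.card + Ω.card) % 2 = 0 then
        ((-1 : ℂ) ^ (Ξ.card * (K.card + L.card))
            * (starRingEnd ℂ) (concatDet A B J K Ξ)
            * Gam f σ Ξ Ω
            * concatDet A B I L Ω)
          • ((oprod f K)ᴴ * oprod f L)
      else 0)
    - Gam f σ ∅ ∅ • ((oprod f J)ᴴ * oprod f I) := by
  rw [LStar_eq U σ hU1, PhiStar_monomials f hff hffd σ hσeven A B U hU1 hU2 hUact I J,
    ← Gam_empty f σ]

end
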